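/- arXiv:2203.06090 — 5 statements merged into one kernel-verified Lean document; each statement's English description precedes it below -/
import Mathlib

section
/- Let C be an n×n symmetric Kalmanson matrix, let S ⊆ {1,…,n} be a set of fixed nodes with 1 ∈ S, and let p ≥ 0 be an integer such that the balanced 2-period TSP instance (C, S, p) admits at least one feasible solution. Then there exists a feasible solution of minimum total cost in which the first tour visits the nodes of its node set T₁ in increasing order of their indices and the second tour visits the nodes of its node set T₂ in decreasing order of their indices. -/
/-- Length of a walk along a list of nodes (sum of consecutive edge costs). -/
def pathLen {α : Type*} (C : α → α → ℝ) : List α → ℝ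
  | [] => 0
  | [_] => 0
  | a :: b :: t => C a b + pathLen C (b :: t)

/-- Length of the closed tour visiting the nodes of `l` in order and
returning from the last node to the first one. -/
def tourLen {α : Type*} (C : α → α → ℝ) (l : List α) : ℝ :=
  pathLen C (l ++ l.take 1)

/-- Kalmanson conditions for a symmetric matrix indexed by `Fin n`. -/
def IsKalmanson {n : ℕ} (C : Fin n → Fin n → ℝ) : Prop :=
  ∀ i j k l : Fin n, i < j → j < k → k < l →
    C i j + C k l ≤ C i k + C j l ∧ C i l + C j k ≤ C i k + C j l

/-- A feasible solution of the balanced 2-period TSP: a pair of tours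
(lists without repetition) whose node sets `T₁, T₂` satisfy
`T₁ ∪ T₂ = {1,…,n}`, `T₁ ∩ T₂ = S`, and `| |T₁| − |T₂| | ≤ p`. -/
def Feasible2TSP {n : ℕ} (S : Finset (Fin n)) (p : ℕ) (l₁ l₂ : List (Fin n)) : Prop :=
  l₁.Nodup ∧ l₂.Nodup ∧
  l₁.toFinset ∪ l₂.toFinset = Finset.univ ∧
  l₁.toFinset ∩ l₂.toFinset = S ∧
  |(l₁.toFinset.card : ℤ) - (l₂.toFinset.card : ℤ)| ≤ (p : ℤ)


/-!
Replacing each tour of a feasible solution by any other tour on the same node set keeps it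
feasible, and reversing a tour does not change its length (`C` is symmetric). So it suffices
that on a Kalmanson matrix the increasing tour is optimal among all tours through a given node
set. This goes by induction, removing the smallest node `m`: in any tour `m` sits between two
distinct nodes `a`, `b`, and the Kalmanson inequalities say that splicing `m` in between the
smallest node `u` and the largest node `z` of the rest, as the increasing tour does, costs
`C m u + C m z - C u z ≤ C m a + C m b - C a b`.
-/

section TourAlgebra

variable {α : Type*} (C : α → α → ℝ)

lemma pathLen_cons {t : List α} (ht : t ≠ []) (a : α) :
    pathLen C (a :: t) = C a (t.head ht) + pathLen C t := by
  obtain ⟨b, t, rfl⟩ := List.exists_cons_of_ne_nil ht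
  rfl

lemma pathLen_append_singleton {l : List α} (hl : l ≠ []) (x : α) :
    pathLen C (l ++ [x]) = pathLen C l + C (l.getLast hl) x := by
  induction l with
  | nil => exact absurd rfl hl
  | cons a t ih =>
    rcases eq_or_ne t [] with rfl | ht
    · simp [pathLen]
    · rw [List.cons_append, pathLen_cons C (by simp), pathLen_cons C ht, ih ht,
        List.head_append_of_ne_nil ht, List.getLast_cons ht]
      ring

lemma tourLen_eq_of_ne_nil {l : List α} (hl : l ≠ []) :
    tourLen C l = pathLen C l + C (l.getLast hl) (l.head hl) := by
  obtain ⟨a, t, rfl⟩ := List.exists_cons_of_ne_nil hl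
  exact pathLen_append_singleton C hl a

lemma tourLen_cons {t : List α} (ht : t ≠ []) (m : α) :
    tourLen C (m :: t) = tourLen C t
      + (C m (t.head ht) + C (t.getLast ht) m - C (t.getLast ht) (t.head ht)) := by
  rw [tourLen_eq_of_ne_nil C (List.cons_ne_nil m t), tourLen_eq_of_ne_nil C ht,
    pathLen_cons C ht, List.getLast_cons ht, List.head_cons]
  ring

lemma tourLen_cons_eq_append_singleton (x : α) (t : List α) :
    tourLen C (x :: t) = tourLen C (t ++ [x]) := by
  rcases eq_or_ne t [] with rfl | ht
  · rfl
  rw [tourLen_eq_of_ne_nil C (List.cons_ne_nil x t), tourLen_eq_of_ne_nil C (by simp),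
    pathLen_cons C ht, pathLen_append_singleton C ht, List.getLast_cons ht,
    List.getLast_append_of_ne_nil _ (List.cons_ne_nil x []), List.head_append_of_ne_nil ht]
  simp only [List.getLast_singleton, List.head_cons]
  ring

lemma tourLen_append_comm (l l' : List α) : tourLen C (l ++ l') = tourLen C (l' ++ l) := by
  induction l generalizing l' with
  | nil => simp
  | cons a t ih =>
    rw [List.cons_append, tourLen_cons_eq_append_singleton, List.append_assoc, ih,
      List.append_assoc, List.singleton_append]

variable {C}

lemma pathLen_reverse (hsym : ∀ i j, C i j = C j i) (l : List α) :
    pathLen C l.reverse = pathLen C l := by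
  induction l with
  | nil => rfl
  | cons a t ih =>
    rcases eq_or_ne t [] with rfl | ht
    · rfl
    rw [List.reverse_cons, pathLen_append_singleton C (List.reverse_ne_nil_iff.2 ht),
      List.getLast_reverse, ih, pathLen_cons C ht, hsym]
    ring

lemma tourLen_reverse (hsym : ∀ i j, C i j = C j i) (l : List α) :
    tourLen C l.reverse = tourLen C l := by
  rcases eq_or_ne l [] with rfl | hl
  · rfl
  rw [tourLen_eq_of_ne_nil C (List.reverse_ne_nil_iff.2 hl), tourLen_eq_of_ne_nil C hl,
    pathLen_reverse hsym, List.getLast_reverse, List.head_reverse, hsym]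

end TourAlgebra

namespace IsKalmanson

variable {n : ℕ} {C : Fin n → Fin n → ℝ}

lemma insertion_le_of_lt (hkal : IsKalmanson C) {m u z a b : Fin n} (hmu : m < u)
    (hua : u ≤ a) (hab : a < b) (hbz : b ≤ z) :
    C m u + C m z - C u z ≤ C m a + C m b - C a b := by
  rcases hua.eq_or_lt with rfl | hua
  · rcases hbz.eq_or_lt with rfl | hbz
    · exact le_rfl
    · linarith [(hkal m u b z hmu hab hbz).2]
  · have h₁ := (hkal m u a b hmu hua hab).1
    rcases hbz.eq_or_lt with rfl | hbz
    · linarith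
    · linarith [(hkal m u b z hmu (hua.trans hab) hbz).2]

lemma insertion_le (hsym : ∀ i j, C i j = C j i) (hkal : IsKalmanson C) {m u z a b : Fin n}
    (hmu : m < u) (hua : u ≤ a) (hub : u ≤ b) (haz : a ≤ z) (hbz : b ≤ z) (hab : a ≠ b) :
    C m u + C m z - C u z ≤ C m a + C m b - C a b := by
  rcases hab.lt_or_gt with hab | hba
  · exact hkal.insertion_le_of_lt hmu hua hab hbz
  · linarith [hkal.insertion_le_of_lt hmu hub hba haz, hsym a b]

lemma tourLen_cons_sort_le (hsym : ∀ i j, C i j = C j i) (hkal : IsKalmanson C) {m : Fin n}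
    {t : List (Fin n)} (ht : t.Nodup) (hmt : ∀ x ∈ t, m < x)
    (hsort : tourLen C (t.toFinset.sort (· ≤ ·)) ≤ tourLen C t) :
    tourLen C (m :: t.toFinset.sort (· ≤ ·)) ≤ tourLen C (m :: t) := by
  rcases t with _ | ⟨a, _ | ⟨b, t⟩⟩
  iterate 2 · rw [(List.toFinset_sort _ ht).2 (by simp)]
  set s := (a :: b :: t).toFinset.sort (· ≤ ·)
  have hsorted : s.Pairwise (· ≤ ·) := Finset.pairwise_sort _ _
  have hmem {x : Fin n} : x ∈ s ↔ x ∈ a :: b :: t := by simp [s]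
  have hs : s ≠ [] := List.ne_nil_of_mem (hmem.2 (List.mem_cons_self ..))
  have hne : a ≠ (a :: b :: t).getLast (by simp) := by
    rw [List.getLast_cons (List.cons_ne_nil b t)]
    exact fun h => (List.nodup_cons.1 ht).1 (h ▸ List.getLast_mem _)
  have hins := hkal.insertion_le hsym (hmt _ (hmem.1 (List.head_mem hs)))
    (hsorted.rel_head (hmem.2 (List.mem_cons_self ..)))
    (hsorted.rel_head (hmem.2 (List.getLast_mem _)))
    (hsorted.rel_getLast (hmem.2 (List.mem_cons_self ..)))
    (hsorted.rel_getLast (hmem.2 (List.getLast_mem _))) hne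
  rw [tourLen_cons C hs, tourLen_cons C (List.cons_ne_nil a (b :: t))]
  simp only [List.head_cons] at hins ⊢
  linarith [hsym (s.getLast hs) m, hsym (s.getLast hs) (s.head hs),
    hsym ((a :: b :: t).getLast (by simp)) m, hsym ((a :: b :: t).getLast (by simp)) a]

theorem tourLen_sort_le (hsym : ∀ i j, C i j = C j i) (hkal : IsKalmanson C)
    {l : List (Fin n)} (hl : l.Nodup) :
    tourLen C (l.toFinset.sort (· ≤ ·)) ≤ tourLen C l := by
  induction hT : l.toFinset using Finset.induction_on_min generalizing l with
  | empty => simp [(List.toFinset_eq_empty_iff l).1 hT]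
  | insert m T hm ih =>
    have hmT : m ∉ T := fun h => lt_irrefl m (hm m h)
    obtain ⟨s₁, s₂, rfl⟩ :=
      List.append_of_mem (List.mem_toFinset.1 (hT ▸ Finset.mem_insert_self m T))
    have hperm : (s₁ ++ m :: s₂).Perm (m :: (s₂ ++ s₁)) :=
      List.perm_middle.trans (List.perm_append_comm.cons m)
    obtain ⟨hmt, ht⟩ := List.nodup_cons.1 (hperm.nodup_iff.1 hl)
    have htT : (s₂ ++ s₁).toFinset = T := by
      rw [← Finset.erase_insert hmT, ← hT, List.toFinset_eq_of_perm _ _ hperm, List.toFinset_cons,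
        Finset.erase_insert (mt List.mem_toFinset.1 hmt)]
    rw [Finset.sort_insert _ (fun x hx => (hm x hx).le) hmT, tourLen_append_comm, List.cons_append,
      ← htT]
    exact hkal.tourLen_cons_sort_le hsym ht (fun x hx => hm x (htT ▸ List.mem_toFinset.2 hx))
      (htT ▸ ih ht htT)

end IsKalmanson

section Feasible

variable {n : ℕ} {S : Finset (Fin n)} {p : ℕ}

lemma Feasible2TSP.of_toFinset_eq {l₁ l₂ m₁ m₂ : List (Fin n)} (h : Feasible2TSP S p l₁ l₂)
    (hm₁ : m₁.Nodup) (hm₂ : m₂.Nodup) (e₁ : m₁.toFinset = l₁.toFinset)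
    (e₂ : m₂.toFinset = l₂.toFinset) : Feasible2TSP S p m₁ m₂ := by
  obtain ⟨-, -, h⟩ := h
  exact ⟨hm₁, hm₂, e₁ ▸ e₂ ▸ h⟩

lemma finite_setOf_feasible2TSP :
    {q : List (Fin n) × List (Fin n) | Feasible2TSP S p q.1 q.2}.Finite := by
  refine ((List.finite_length_le (Fin n) n).prod (List.finite_length_le (Fin n) n)).subset ?_
  rintro ⟨l₁, l₂⟩ ⟨h₁, h₂, -⟩
  exact ⟨h₁.length_le_card.trans (Fintype.card_fin n).le,
    h₂.length_le_card.trans (Fintype.card_fin n).le⟩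

end Feasible

theorem balanced_two_period_TSP_has_sorted_optimal_solution_general
    {n : ℕ} (C : Fin n → Fin n → ℝ)
    (hsym : ∀ i j, C i j = C j i) (hkal : IsKalmanson C)
    (S : Finset (Fin n)) (p : ℕ)
    (hfeas : ∃ l₁ l₂ : List (Fin n), Feasible2TSP S p l₁ l₂) :
    ∃ l₁ l₂ : List (Fin n), Feasible2TSP S p l₁ l₂ ∧
      l₁ = l₁.toFinset.sort (· ≤ ·) ∧
      l₂ = (l₂.toFinset.sort (· ≤ ·)).reverse ∧
      ∀ m₁ m₂ : List (Fin n), Feasible2TSP S p m₁ m₂ →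
        tourLen C l₁ + tourLen C l₂ ≤ tourLen C m₁ + tourLen C m₂ := by
  obtain ⟨l₁, l₂, hl⟩ := hfeas
  obtain ⟨⟨m₁, m₂⟩, hm, hmin⟩ := Set.exists_min_image _ (fun q => tourLen C q.1 + tourLen C q.2)
    finite_setOf_feasible2TSP ⟨(l₁, l₂), hl⟩
  have hrev : (m₂.toFinset.sort (· ≤ ·)).reverse.toFinset = m₂.toFinset := by
    rw [List.toFinset_reverse, Finset.sort_toFinset]
  refine ⟨m₁.toFinset.sort (· ≤ ·), (m₂.toFinset.sort (· ≤ ·)).reverse,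
    hm.of_toFinset_eq (Finset.sort_nodup _ _) (List.nodup_reverse.2 (Finset.sort_nodup _ _))
      (Finset.sort_toFinset _ _) hrev,
    by rw [Finset.sort_toFinset], by rw [hrev], fun k₁ k₂ hk => ?_⟩
  have h₁ := hkal.tourLen_sort_le hsym hm.1
  have h₂ := hkal.tourLen_sort_le hsym hm.2.1
  rw [tourLen_reverse hsym]
  linarith [hmin (k₁, k₂) hk]

theorem balanced_two_period_TSP_has_sorted_optimal_solution
    {n : ℕ} (hn : 0 < n) (C : Fin n → Fin n → ℝ)
    (hsym : ∀ i j, C i j = C j i) (hkal : IsKalmanson C)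
    (S : Finset (Fin n)) (h1S : (⟨0, hn⟩ : Fin n) ∈ S) (p : ℕ)
    (hfeas : ∃ l₁ l₂ : List (Fin n), Feasible2TSP S p l₁ l₂) :
    ∃ l₁ l₂ : List (Fin n), Feasible2TSP S p l₁ l₂ ∧
      l₁ = l₁.toFinset.sort (· ≤ ·) ∧
      l₂ = (l₂.toFinset.sort (· ≤ ·)).reverse ∧
      ∀ m₁ m₂ : List (Fin n), Feasible2TSP S p m₁ m₂ →
        tourLen C l₁ + tourLen C l₂ ≤ tourLen C m₁ + tourLen C m₂ :=
  balanced_two_period_TSP_has_sorted_optimal_solution_general C hsym hkal S p hfeas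
end

section
/- Let C be an n×n symmetric Kalmanson matrix, let k ∈ {1,…,n}, and let σ be the cyclic shift σ = (k, k+1, …, n, 1, 2, …, k−1), i.e., σ(i) = k + i − 1 for 1 ≤ i ≤ n − k + 1 and σ(i) = i − (n − k + 1) for n − k + 1 < i ≤ n. Then the matrix C_σ with entries (C_σ)_{ij} = c_{σ(i), σ(j)} is a symmetric Kalmanson matrix. -/
/-- The cyclic shift `σ = (k, k+1, …, n, 1, 2, …, k−1)` in 0-indexed form:
`σ(i) = (i + (k − 1)) mod n`. -/
def cyclicShift (n k : ℕ) (hn : 0 < n) : Fin n → Fin n :=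
  fun i => ⟨(i.val + (k - 1)) % n, Nat.mod_lt _ hn⟩

theorem kalmanson_cyclic_shift
    {n : ℕ} (hn : 0 < n) (C : Fin n → Fin n → ℝ)
    (hsym : ∀ i j, C i j = C j i) (hkal : IsKalmanson C)
    (k : ℕ) (hk1 : 1 ≤ k) (hkn : k ≤ n) :
    (∀ i j : Fin n,
        C (cyclicShift n k hn i) (cyclicShift n k hn j) =
          C (cyclicShift n k hn j) (cyclicShift n k hn i)) ∧
    IsKalmanson (fun i j : Fin n => C (cyclicShift n k hn i) (cyclicShift n k hn j)) := by
  refine ⟨fun i j => hsym _ _, ?_⟩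
  intro i j p q hij hjp hpq
  simp only
  set s := k - 1 with hsdef
  have hsn : s < n := by omega
  have key : ∀ x : Fin n, (cyclicShift n k hn x).val =
      if n ≤ x.val + s then x.val + s - n else x.val + s := by
    intro x
    show (x.val + s) % n = _
    split
    · rw [Nat.mod_eq_sub_mod (by omega), Nat.mod_eq_of_lt (by omega)]
    · exact Nat.mod_eq_of_lt (by omega)
  set a := cyclicShift n k hn i with ha
  set b := cyclicShift n k hn j with hb
  set c := cyclicShift n k hn p with hc
  set d := cyclicShift n k hn q with hd
  have hav := key i; have hbv := key j; have hcv := key p; have hdv := key q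
  rw [← ha] at hav; rw [← hb] at hbv; rw [← hc] at hcv; rw [← hd] at hdv
  have hij' : i.val < j.val := hij
  have hjp' : j.val < p.val := hjp
  have hpq' : p.val < q.val := hpq
  have hi := i.isLt; have hj := j.isLt; have hp := p.isLt; have hq := q.isLt
  by_cases h1 : n ≤ i.val + s
  · -- all wrap: order preserved
    rw [if_pos h1] at hav
    rw [if_pos (by omega)] at hbv hcv hdv
    have hab : a < b := by rw [Fin.lt_def]; omega
    have hbc : b < c := by rw [Fin.lt_def]; omega
    have hcd : c < d := by rw [Fin.lt_def]; omega
    exact hkal a b c d hab hbc hcd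
  by_cases h2 : n ≤ j.val + s
  · -- j,p,q wrap: order b < c < d < a
    rw [if_neg h1] at hav
    rw [if_pos h2] at hbv
    rw [if_pos (by omega)] at hcv hdv
    have hbc : b < c := by rw [Fin.lt_def]; omega
    have hcd : c < d := by rw [Fin.lt_def]; omega
    have hda : d < a := by rw [Fin.lt_def]; omega
    obtain ⟨e1, e2⟩ := hkal b c d a hbc hcd hda
    constructor
    · linarith [hsym b a, hsym d a, hsym c a, hsym d b]
    · linarith [hsym b a, hsym d a, hsym c a, hsym d b]
  by_cases h3 : n ≤ p.val + s
  · -- p,q wrap: order c < d < a < b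
    rw [if_neg h1] at hav
    rw [if_neg h2] at hbv
    rw [if_pos h3] at hcv
    rw [if_pos (by omega)] at hdv
    have hcd : c < d := by rw [Fin.lt_def]; omega
    have hda : d < a := by rw [Fin.lt_def]; omega
    have hab : a < b := by rw [Fin.lt_def]; omega
    obtain ⟨e1, e2⟩ := hkal c d a b hcd hda hab
    constructor
    · linarith [hsym c a, hsym d a, hsym c b, hsym d b]
    · linarith [hsym c a, hsym d a, hsym c b, hsym d b]
  by_cases h4 : n ≤ q.val + s
  · -- only q wraps: order d < a < b < c
    rw [if_neg h1] at hav
    rw [if_neg h2] at hbv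
    rw [if_neg h3] at hcv
    rw [if_pos h4] at hdv
    have hda : d < a := by rw [Fin.lt_def]; omega
    have hab : a < b := by rw [Fin.lt_def]; omega
    have hbc : b < c := by rw [Fin.lt_def]; omega
    obtain ⟨e1, e2⟩ := hkal d a b c hda hab hbc
    constructor
    · linarith [hsym d a, hsym d b, hsym d c]
    · linarith [hsym d a, hsym d b, hsym d c]
  · -- none wrap
    rw [if_neg h1] at hav
    rw [if_neg h2] at hbv
    rw [if_neg h3] at hcv
    rw [if_neg h4] at hdv
    have hab : a < b := by rw [Fin.lt_def]; omega
    have hbc : b < c := by rw [Fin.lt_def]; omega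
    have hcd : c < d := by rw [Fin.lt_def]; omega
    exact hkal a b c d hab hbc hcd
end

section
/- Let E be a real normed vector space and let a, b, c, d, q ∈ E be points such that q lies on the closed segment [a, c] and also on the closed segment [b, d]. Then ‖a − b‖ + ‖c − d‖ ≤ ‖a − c‖ + ‖b − d‖ and ‖a − d‖ + ‖b − c‖ ≤ ‖a − c‖ + ‖b − d‖; that is, for a quadrilateral whose diagonals [a,c] and [b,d] intersect, the total length of the diagonals is at least the total length of either pair of opposite sides. -/
theorem crossing_diagonals_inequality
    {E : Type*} [NormedAddCommGroup E] [NormedSpace ℝ E]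
    (a b c d q : E) (hac : q ∈ segment ℝ a c) (hbd : q ∈ segment ℝ b d) :
    ‖a - b‖ + ‖c - d‖ ≤ ‖a - c‖ + ‖b - d‖ ∧
    ‖a - d‖ + ‖b - c‖ ≤ ‖a - c‖ + ‖b - d‖ := by
  have h1 := dist_add_dist_of_mem_segment hac
  have h2 := dist_add_dist_of_mem_segment hbd
  simp only [← dist_eq_norm]
  constructor
  · calc dist a b + dist c d ≤ (dist a q + dist q b) + (dist c q + dist q d) := by
          gcongr <;> exact dist_triangle _ _ _
      _ = (dist a q + dist q c) + (dist b q + dist q d) := by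
          rw [dist_comm c q, dist_comm q b]; ring
      _ = dist a c + dist b d := by rw [h1, h2]
  · calc dist a d + dist b c ≤ (dist a q + dist q d) + (dist b q + dist q c) := by
          gcongr <;> exact dist_triangle _ _ _
      _ = (dist a q + dist q c) + (dist b q + dist q d) := by ring
      _ = dist a c + dist b d := by rw [h1, h2]
end

section
/- Let x₁, …, xₙ be points in the Euclidean plane ℝ² such that for all 1 ≤ i < j < k ≤ n the orientation determinant det(x_j − x_i, x_k − x_i) is strictly positive (i.e., the points are in strictly convex position, numbered counterclockwise along the boundary of their convex hull). Then the Euclidean distance matrix C with entries c_{ij} = ‖x_i − x_j‖ is a symmetric Kalmanson matrix. -/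
theorem dist_add_dist_le_of_diagonals_meet {α : Type*} [PseudoMetricSpace α] {a b c d p : α}
    (hac : dist a p + dist p c = dist a c) (hbd : dist b p + dist p d = dist b d) :
    dist a b + dist c d ≤ dist a c + dist b d ∧ dist a d + dist b c ≤ dist a c + dist b d := by
  constructor
  · linarith [dist_triangle a p b, dist_triangle c p d, dist_comm p b, dist_comm c p]
  · linarith [dist_triangle a p d, dist_triangle b p c]

def det2 (u v : EuclideanSpace ℝ (Fin 2)) : ℝ :=
  u 0 * v 1 - u 1 * v 0

theorem exists_mem_segment_inter_of_det2_pos {a b c d : EuclideanSpace ℝ (Fin 2)}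
    (habc : 0 < det2 (b - a) (c - a)) (habd : 0 < det2 (b - a) (d - a))
    (hacd : 0 < det2 (c - a) (d - a)) (hbcd : 0 < det2 (c - b) (d - b)) :
    ∃ p, p ∈ segment ℝ a c ∧ p ∈ segment ℝ b d := by
  set D₁ := det2 (b - a) (c - a)
  set D₂ := det2 (b - a) (d - a)
  set D₃ := det2 (c - a) (d - a)
  set D₄ := det2 (c - b) (d - b)
  -- `D₄ a + D₂ c = D₃ b + D₁ d` and `D₂ + D₄ = D₁ + D₃`: the intersection point in barycentric form.
  have hsum : D₂ + D₄ = D₁ + D₃ := by simp only [D₁, D₂, D₃, D₄, det2, PiLp.sub_apply]; ring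
  refine ⟨(D₄ / (D₄ + D₂)) • a + (D₂ / (D₄ + D₂)) • c,
    mem_segment_iff_div.2 ⟨D₄, D₂, hbcd.le, habd.le, by positivity, rfl⟩,
    mem_segment_iff_div.2 ⟨D₃, D₁, hacd.le, habc.le, by positivity, ?_⟩⟩
  have hpos : D₃ + D₁ ≠ 0 := by positivity
  rw [show D₄ + D₂ = D₃ + D₁ by linarith]
  ext m
  fin_cases m <;>
  · simp only [PiLp.add_apply, PiLp.smul_apply, smul_eq_mul, Fin.zero_eta, Fin.mk_one]
    field_simp
    simp only [D₁, D₂, D₃, D₄, det2, PiLp.sub_apply]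
    ring

theorem convex_position_gives_kalmanson
    {n : ℕ} (x : Fin n → EuclideanSpace ℝ (Fin 2))
    (hconv : ∀ i j k : Fin n, i < j → j < k →
      0 < (x j - x i) 0 * (x k - x i) 1 - (x j - x i) 1 * (x k - x i) 0) :
    (∀ i j : Fin n, ‖x i - x j‖ = ‖x j - x i‖) ∧
    IsKalmanson (fun i j : Fin n => ‖x i - x j‖) := by
  refine ⟨fun i j => norm_sub_rev _ _, fun i j k l hij hjk hkl => ?_⟩
  obtain ⟨p, hpac, hpbd⟩ := exists_mem_segment_inter_of_det2_pos
    (hconv i j k hij hjk) (hconv i j l hij (hjk.trans hkl))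
    (hconv i k l (hij.trans hjk) hkl) (hconv j k l hjk hkl)
  simpa only [dist_eq_norm] using dist_add_dist_le_of_diagonals_meet
    (dist_add_dist_of_mem_segment hpac) (dist_add_dist_of_mem_segment hpbd)
end

section
/- Let L > 0 and let 0 ≤ x₁ ≤ x₂ ≤ … ≤ xₙ ≤ L be real numbers, regarded as points on a cycle of circumference L numbered in order around the cycle. Define the n×n matrix C by c_{ij} = min(|x_i − x_j|, L − |x_i − x_j|), the shortest-path distance along the cycle. Then C is a symmetric Kalmanson matrix. -/
lemma min_cycle_eq (L t : ℝ) : min t (L - t) = (L - |2 * t - L|) / 2 := by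
  rcases le_total t (L - t) with h | h
  · rw [min_eq_left h, abs_of_nonpos (by linarith)]; ring
  · rw [min_eq_right h, abs_of_nonneg (by linarith)]; ring

lemma cycle_key (L a b c d : ℝ) (hL : 0 < L) (ha : 0 ≤ a) (hab : a ≤ b)
    (hbc : b ≤ c) (hcd : c ≤ d) (hd : d ≤ L) :
    min (b - a) (L - (b - a)) + min (d - c) (L - (d - c)) ≤
      min (c - a) (L - (c - a)) + min (d - b) (L - (d - b)) ∧
    min (d - a) (L - (d - a)) + min (c - b) (L - (c - b)) ≤
      min (c - a) (L - (c - a)) + min (d - b) (L - (d - b)) := by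
  rw [min_cycle_eq, min_cycle_eq, min_cycle_eq, min_cycle_eq, min_cycle_eq, min_cycle_eq]
  constructor
  · rcases abs_cases (2 * (b - a) - L) with ⟨h1, h1'⟩ | ⟨h1, h1'⟩ <;>
      rcases abs_cases (2 * (d - c) - L) with ⟨h2, h2'⟩ | ⟨h2, h2'⟩ <;>
      rcases abs_cases (2 * (c - a) - L) with ⟨h3, h3'⟩ | ⟨h3, h3'⟩ <;>
      rcases abs_cases (2 * (d - b) - L) with ⟨h4, h4'⟩ | ⟨h4, h4'⟩ <;>
      linarith
  · rcases abs_cases (2 * (d - a) - L) with ⟨h1, h1'⟩ | ⟨h1, h1'⟩ <;>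
      rcases abs_cases (2 * (c - b) - L) with ⟨h2, h2'⟩ | ⟨h2, h2'⟩ <;>
      rcases abs_cases (2 * (c - a) - L) with ⟨h3, h3'⟩ | ⟨h3, h3'⟩ <;>
      rcases abs_cases (2 * (d - b) - L) with ⟨h4, h4'⟩ | ⟨h4, h4'⟩ <;>
      linarith

theorem points_on_cycle_give_kalmanson
    {n : ℕ} (L : ℝ) (hL : 0 < L) (x : Fin n → ℝ) (hx : Monotone x)
    (hx0 : ∀ i, 0 ≤ x i) (hxL : ∀ i, x i ≤ L) :
    (∀ i j : Fin n,
        min |x i - x j| (L - |x i - x j|) = min |x j - x i| (L - |x j - x i|)) ∧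
    IsKalmanson (fun i j : Fin n => min |x i - x j| (L - |x i - x j|)) := by
  have habs : ∀ i j : Fin n, i ≤ j → |x i - x j| = x j - x i := by
    intro i j hij
    rw [abs_sub_comm, abs_of_nonneg (sub_nonneg.2 (hx hij))]
  refine ⟨fun i j => by rw [abs_sub_comm], ?_⟩
  intro i j k l hij hjk hkl
  simp only
  rw [habs i j hij.le, habs k l hkl.le, habs i k (hij.trans hjk).le,
    habs j l (hjk.trans hkl).le, habs i l (hij.trans (hjk.trans hkl)).le, habs j k hjk.le]
  exact cycle_key L (x i) (x j) (x k) (x l) hL (hx0 i) (hx hij.le) (hx hjk.le)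
    (hx hkl.le) (hxL l)
end
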